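/- arXiv:1907.04845 — 4 statements merged into one kernel-verified Lean document; each statement's English description precedes it below -/
import Mathlib

section
/- For every integer k ≥ 2 and every positive integer N, one has Z̃_k(N) = Σ_{c∈ℕ, N∣c} z_k(c). -/
open scoped Classical BigOperators Topology
open Filter Asymptotics

/-- Real Riemann zeta: `ζ(s) = ∑ 1/n^s` (valid representation for `s > 1`). -/
noncomputable def zetaR (s : ℝ) : ℝ := ∑' n : ℕ, 1 / (n : ℝ) ^ s

/-- `q` is `k`-free: no prime `p` with `p^k ∣ q`. -/
def KFree (k q : ℕ) : Prop := ∀ p : ℕ, p.Prime → ¬ p ^ k ∣ q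

/-- Indicator (real valued) of `k`-free integers. -/
noncomputable def muk (k q : ℕ) : ℝ := if KFree k q then 1 else 0

/-- `∏_{p ∣ q} (p^k - 1)^{-2}`. -/
noncomputable def Pk (k q : ℕ) : ℝ :=
  ∏ p ∈ q.primeFactors, (((p : ℝ) ^ k - 1) ^ 2)⁻¹

/-- The diffraction intensity `Z_k(ε)` of the `k`-free integers
(Baake–Moody–Pleasants formula). -/
noncomputable def Zk (k : ℕ) (ε : ℝ) : ℝ :=
  ∑' q : ℕ, muk (k + 1) q *
    ((((Finset.Icc 1 ⌊(q : ℝ) * ε⌋₊).filter fun m => Nat.gcd m q = 1)).card : ℝ) * Pk k q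

/-- The discretised quantity `Z̃_k(N)`. -/
noncomputable def Ztilde (k N : ℕ) : ℝ :=
  ∑' q : ℕ, muk (k + 1) q * Pk k q *
    ((((Finset.Icc 1 (q / N)).filter fun m => Nat.gcd m q = 1)).card : ℝ)

/-- The quantity `z_k(c)`. -/
noncomputable def zk (k c : ℕ) : ℝ :=
  ∑' r : ℕ, ∑' d : ℕ,
    (if c ≤ r then (1 : ℝ) else 0) * (ArithmeticFunction.moebius d : ℝ) *
      muk (k + 1) (d * r) * Pk k (d * r)

/-- `ξ_k := ∏_p (1 - (p^k-1)^{-2})`. -/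
noncomputable def xi (k : ℕ) : ℝ :=
  ∏' p : Nat.Primes, (1 - ((((p : ℕ) : ℝ) ^ k - 1) ^ 2)⁻¹)

/-- `γ_k := ζ(2)⁻¹ ∏_p (1 + 2/((p+1)(p^k-2)))`. -/
noncomputable def gam (k : ℕ) : ℝ :=
  (zetaR 2)⁻¹ * ∏' p : Nat.Primes, (1 + 2 / ((((p : ℕ) : ℝ) + 1) * (((p : ℕ) : ℝ) ^ k - 2)))

/-- The leading constant `c_k`. -/
noncomputable def ck (k : ℕ) : ℝ :=
  (2 * (k : ℝ) / (2 * (k : ℝ) - 1)) * (zetaR (2 - 1 / (k : ℝ)) / zetaR 2) * (zetaR (k : ℝ)) ^ 2 *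
    ∏' p : Nat.Primes, (1 - 2 * ((p : ℕ) : ℝ) / ((((p : ℕ) : ℝ) + 1) * ((p : ℕ) : ℝ) ^ k))


/-!
Möbius inversion counts the `m ≤ q / N` coprime to `q` as `∑_{d ∣ q} μ(d) ⌊q / (d N)⌋`, so with
`q = r d` one gets `Z̃_k(N) = ∑_{r, d} μ(d) μ_{k+1}(d r) P(d r) ⌊r / N⌋`. As `⌊r / N⌋` counts the
multiples `c` of `N` in `(0, r]`, exchanging the sum over `(r, d)` with the sum over `c` gives
`∑_{N ∣ c} z_k(c)`. Every rearrangement is justified by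
`∑_{r, d} r μ_{k+1}(d r) P(d r) = ∑_q μ_{k+1}(q) P(q) σ(q) < ∞`: the summand is multiplicative with
local factors `1 + O(k² / p^k)`, so its Euler product converges because `k ≥ 2`.
-/

open ArithmeticFunction
open scoped ArithmeticFunction.sigma ArithmeticFunction.Moebius Finset

lemma not_kFree_zero (K : ℕ) : ¬ KFree K 0 :=
  fun h => h 2 Nat.prime_two (dvd_zero _)

lemma kFree_mul_iff {K m n : ℕ} (hmn : m.Coprime n) :
    KFree K (m * n) ↔ KFree K m ∧ KFree K n := by
  rcases K.eq_zero_or_pos with rfl | hK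
  · simp [KFree]
  · have hpow : ∀ p : ℕ, p.Prime → IsPrimePow (p ^ K) :=
      fun p hp => hp.isPrimePow.pow hK.ne'
    simp only [KFree]
    refine ⟨fun h => ⟨fun p hp hd => h p hp ?_, fun p hp hd => h p hp ?_⟩,
      fun h p hp hd => ?_⟩
    · exact hd.mul_right n
    · exact hd.mul_left m
    · rcases (hmn.isPrimePow_dvd_mul (hpow p hp)).1 hd with hd | hd
      exacts [h.1 p hp hd, h.2 p hp hd]

lemma muk_mul {K m n : ℕ} (hmn : m.Coprime n) : muk K (m * n) = muk K m * muk K n := by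
  simp only [muk, kFree_mul_iff hmn]
  split_ifs <;> simp_all

lemma Pk_mul {k m n : ℕ} (hm : m ≠ 0) (hn : n ≠ 0) (hmn : m.Coprime n) :
    Pk k (m * n) = Pk k m * Pk k n := by
  rw [Pk, Nat.primeFactors_mul hm hn, Finset.prod_union hmn.disjoint_primeFactors]
  rfl

noncomputable def kFreeWeight (k : ℕ) : ArithmeticFunction ℝ :=
  ⟨fun q => muk (k + 1) q * Pk k q, by simp [muk, not_kFree_zero]⟩

lemma kFreeWeight_apply (k q : ℕ) : kFreeWeight k q = muk (k + 1) q * Pk k q := rfl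

lemma kFreeWeight_nonneg (k q : ℕ) : 0 ≤ kFreeWeight k q := by
  rw [kFreeWeight_apply, muk, Pk]
  positivity

lemma isMultiplicative_kFreeWeight (k : ℕ) : (kFreeWeight k).IsMultiplicative := by
  refine IsMultiplicative.iff_ne_zero.2 ⟨?_, fun hm hn hmn => ?_⟩
  · have : KFree (k + 1) 1 := fun p hp hd => hp.one_lt.ne' (Nat.pow_eq_one.1 (Nat.dvd_one.1 hd)
      |>.resolve_right k.succ_ne_zero)
    simp [kFreeWeight_apply, muk, Pk, this]
  · simp only [kFreeWeight_apply, muk_mul hmn, Pk_mul hm hn hmn]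
    ring

lemma kFreeWeight_prime_pow_eq_zero {k p e : ℕ} (hp : p.Prime) (he : k + 1 ≤ e) :
    kFreeWeight k (p ^ e) = 0 := by
  have : ¬ KFree (k + 1) (p ^ e) := fun h => h p hp (pow_dvd_pow p he)
  simp [kFreeWeight_apply, muk, this]

lemma kFreeWeight_prime_pow_le {k p e : ℕ} (hk : 1 ≤ k) (hp : p.Prime) (he : e ≠ 0) :
    kFreeWeight k (p ^ e) ≤ 4 / (p : ℝ) ^ (2 * k) := by
  have hpk : (2 : ℝ) ≤ (p : ℝ) ^ k := by
    calc (2 : ℝ) ≤ p := mod_cast hp.two_le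
      _ ≤ (p : ℝ) ^ k := le_self_pow₀ (mod_cast hp.one_le) (by omega)
  have hPk : Pk k (p ^ e) = (((p : ℝ) ^ k - 1) ^ 2)⁻¹ := by
    simp [Pk, Nat.primeFactors_prime_pow he hp]
  have hmuk : muk (k + 1) (p ^ e) ≤ 1 := by unfold muk; split_ifs <;> norm_num
  calc kFreeWeight k (p ^ e) ≤ 1 * (((p : ℝ) ^ k - 1) ^ 2)⁻¹ := by
        rw [kFreeWeight_apply, hPk]
        gcongr
    _ ≤ 4 / (p : ℝ) ^ (2 * k) := by
        rw [one_mul, pow_mul', inv_eq_one_div, div_le_div_iff₀ (by nlinarith) (by positivity)]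
        nlinarith

theorem ArithmeticFunction.IsMultiplicative.summable_of_nonneg {f : ArithmeticFunction ℝ}
    (hf : f.IsMultiplicative) (hf₀ : ∀ n, 0 ≤ f n)
    (hpow : ∀ p : ℕ, p.Prime → Summable fun e => f (p ^ e))
    (hprimes : Summable fun p : Nat.Primes => ∑' e, f ((p : ℕ) ^ (e + 1))) :
    Summable f := by
  set b : ℕ → ℝ := fun p => ∑' e, f (p ^ (e + 1))
  have hb₀ : ∀ p, 0 ≤ b p := fun p => tsum_nonneg fun e => hf₀ _
  refine summable_of_sum_le hf₀ (c := Real.exp (∑' p : Nat.Primes, b p)) fun u => ?_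
  set n := u.sup id + 1
  obtain ⟨hsmooth, hprod⟩ := EulerProduct.summable_and_hasSum_smoothNumbers_prod_primesBelow_tsum
    hf.map_one hf.map_mul_of_coprime (fun hp => by simpa using (hpow _ hp).abs) n
  have hu : ∀ q ∈ u, f q ≠ 0 → q ∈ n.smoothNumbers := fun q hq hfq =>
    Nat.mem_smoothNumbers_of_lt (Nat.pos_of_ne_zero (by rintro rfl; simp at hfq))
      (Nat.lt_succ_of_le (Finset.le_sup (f := id) hq))
  have hfactor : ∀ p : ℕ, p.Prime → ∑' e, f (p ^ e) ≤ Real.exp (b p) := fun p hp => by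
    rw [(hpow p hp).tsum_eq_zero_add, pow_zero, hf.map_one, add_comm]
    exact Real.add_one_le_exp _
  calc ∑ q ∈ u, f q = ∑ q ∈ u.subtype (· ∈ n.smoothNumbers), f q := by
        rw [Finset.sum_subtype_eq_sum_filter, Finset.sum_filter_of_ne hu]
    _ ≤ ∑' q : n.smoothNumbers, f q := hsmooth.of_norm.sum_le_tsum _ fun q _ => hf₀ q
    _ = ∏ p ∈ n.primesBelow, ∑' e, f (p ^ e) := hprod.tsum_eq
    _ ≤ ∏ p ∈ n.primesBelow, Real.exp (b p) := Finset.prod_le_prod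
        (fun p _ => tsum_nonneg fun e => hf₀ _)
        (fun p hp => hfactor p (Nat.prime_of_mem_primesBelow hp))
    _ = Real.exp (∑ p ∈ (n.primesBelow).subtype Nat.Prime, b p) := by
        rw [← Real.exp_sum, Finset.sum_subtype_eq_sum_filter,
          Finset.filter_true_of_mem fun p hp => Nat.prime_of_mem_primesBelow hp]
    _ ≤ Real.exp (∑' p : Nat.Primes, b p) :=
        Real.exp_le_exp.2 (hprimes.sum_le_tsum (ι := Nat.Primes) _ fun p _ => hb₀ p)

section DivisorsAntidiagonal

variable {f : ℕ × ℕ → ℝ}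

lemma indicator_mulFiber_eq (hf : ∀ x : ℕ × ℕ, x.1 * x.2 = 0 → f x = 0) (n : ℕ) :
    ((fun x : ℕ × ℕ => x.1 * x.2) ⁻¹' {n}).indicator f =
      (n.divisorsAntidiagonal : Set (ℕ × ℕ)).indicator f := by
  ext x
  by_cases hx : x.1 * x.2 = n
  · subst hx
    by_cases h0 : x.1 * x.2 = 0
    · simp [hf x h0, h0]
    · simp [Set.indicator, Nat.mem_divisorsAntidiagonal, h0]
  · simp [Set.indicator, Nat.mem_divisorsAntidiagonal, hx]

lemma tsum_mulFiber_eq_sum_divisorsAntidiagonal (hf : ∀ x : ℕ × ℕ, x.1 * x.2 = 0 → f x = 0)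
    (n : ℕ) :
    ∑' x : (fun x : ℕ × ℕ => x.1 * x.2) ⁻¹' {n}, f x = ∑ x ∈ n.divisorsAntidiagonal, f x := by
  rw [tsum_subtype, indicator_mulFiber_eq hf, ← tsum_subtype, Finset.tsum_subtype']

lemma summable_mulFiber (hf : ∀ x : ℕ × ℕ, x.1 * x.2 = 0 → f x = 0) (n : ℕ) :
    Summable fun x : (fun x : ℕ × ℕ => x.1 * x.2) ⁻¹' {n} => f x := by
  rw [← Function.comp_def, summable_subtype_iff_indicator, indicator_mulFiber_eq hf]
  exact summable_of_ne_finset_zero fun x hx => Set.indicator_of_notMem hx f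

lemma summable_iff_summable_sum_divisorsAntidiagonal (hf₀ : 0 ≤ f)
    (hf : ∀ x : ℕ × ℕ, x.1 * x.2 = 0 → f x = 0) :
    Summable f ↔ Summable fun n : ℕ => ∑ x ∈ n.divisorsAntidiagonal, f x := by
  rw [← (Equiv.sigmaFiberEquiv fun x : ℕ × ℕ => x.1 * x.2).summable_iff,
    summable_sigma_of_nonneg (f := f ∘ _) fun _ => hf₀ _]
  simp only [Function.comp_apply, Equiv.sigmaFiberEquiv_apply]
  refine (and_iff_right fun n => summable_mulFiber hf n).trans ?_
  exact iff_of_eq (congrArg Summable (funext (tsum_mulFiber_eq_sum_divisorsAntidiagonal hf)))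

lemma tsum_eq_tsum_sum_divisorsAntidiagonal (hf : ∀ x : ℕ × ℕ, x.1 * x.2 = 0 → f x = 0)
    (hs : Summable f) :
    ∑' x, f x = ∑' n : ℕ, ∑ x ∈ n.divisorsAntidiagonal, f x := by
  rw [← (hs.hasSum.tsum_fiberwise fun x : ℕ × ℕ => x.1 * x.2).tsum_eq]
  exact tsum_congr (tsum_mulFiber_eq_sum_divisorsAntidiagonal hf)

end DivisorsAntidiagonal

section Summability

variable {k : ℕ}

lemma sigma_one_prime_pow_le {p e : ℕ} (hp : p.Prime) : σ 1 (p ^ e) ≤ (e + 1) * p ^ e := by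
  rw [sigma_one_apply_prime_pow hp]
  calc ∑ i ∈ Finset.range (e + 1), p ^ i ≤ ∑ _i ∈ Finset.range (e + 1), p ^ e :=
        Finset.sum_le_sum fun i hi => Nat.pow_le_pow_right hp.pos (Finset.mem_range_succ_iff.1 hi)
    _ = (e + 1) * p ^ e := by simp

lemma kFreeWeight_pmul_sigma_prime_pow_le (hk : 2 ≤ k) {p e : ℕ} (hp : p.Prime) (he : e ≠ 0)
    (hek : e ≤ k) :
    ((kFreeWeight k).pmul (σ 1)) (p ^ e) ≤ 4 * (k + 1) / (p : ℝ) ^ 2 := by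
  have hp1 : (1 : ℝ) ≤ p := mod_cast hp.one_le
  have hσ : (σ 1 (p ^ e) : ℝ) ≤ (k + 1) * (p : ℝ) ^ k := by
    calc (σ 1 (p ^ e) : ℝ) ≤ ((e + 1) * p ^ e : ℕ) := mod_cast sigma_one_prime_pow_le hp
      _ ≤ (k + 1) * (p : ℝ) ^ k := by
        push_cast
        gcongr
  rw [pmul_apply, natCoe_apply]
  calc kFreeWeight k (p ^ e) * (σ 1 (p ^ e) : ℝ)
      ≤ 4 / (p : ℝ) ^ (2 * k) * ((k + 1) * (p : ℝ) ^ k) := by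
        gcongr
        exact kFreeWeight_prime_pow_le (by omega) hp he
    _ = 4 * (k + 1) / (p : ℝ) ^ k := by
        rw [two_mul, pow_add]
        field_simp
    _ ≤ 4 * (k + 1) / (p : ℝ) ^ 2 := by
        gcongr

lemma summable_kFreeWeight_pmul_sigma (hk : 2 ≤ k) :
    Summable ((kFreeWeight k).pmul (σ 1) : ArithmeticFunction ℝ) := by
  set g : ArithmeticFunction ℝ := (kFreeWeight k).pmul (σ 1)
  have hg₀ : ∀ n, 0 ≤ g n := fun n => by
    simp only [g, pmul_apply, natCoe_apply]
    exact mul_nonneg (kFreeWeight_nonneg k n) (Nat.cast_nonneg _)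
  have hvanish : ∀ p : ℕ, p.Prime → ∀ e, k + 1 ≤ e → g (p ^ e) = 0 := fun p hp e he => by
    simp [g, pmul_apply, kFreeWeight_prime_pow_eq_zero hp he]
  have hprime : ∀ p : ℕ, p.Prime → ∑' e, g (p ^ (e + 1)) ≤ k * (4 * (k + 1)) * ((p : ℝ) ^ 2)⁻¹ :=
    fun p hp => by
    rw [tsum_eq_sum (s := Finset.range k) fun e he => hvanish p hp _ (by simpa using he)]
    calc ∑ e ∈ Finset.range k, g (p ^ (e + 1))
        ≤ ∑ _e ∈ Finset.range k, 4 * (k + 1) / (p : ℝ) ^ 2 := Finset.sum_le_sum fun e he =>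
          kFreeWeight_pmul_sigma_prime_pow_le hk hp e.succ_ne_zero (Finset.mem_range.1 he)
      _ = k * (4 * (k + 1)) * ((p : ℝ) ^ 2)⁻¹ := by simp [div_eq_mul_inv, mul_assoc]
  refine (isMultiplicative_kFreeWeight k).pmul isMultiplicative_sigma.natCast
    |>.summable_of_nonneg hg₀ (fun p hp => ?_) ?_
  · exact summable_of_ne_finset_zero (s := Finset.range (k + 1)) fun e he =>
      hvanish p hp e (by simpa using he)
  · refine Summable.of_nonneg_of_le (fun p => tsum_nonneg fun e => hg₀ _)
      (fun p => hprime p p.prop) ?_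
    exact (Real.summable_nat_pow_inv.2 one_lt_two).comp_injective Subtype.val_injective |>.mul_left _

lemma summable_fst_mul_kFreeWeight (hk : 2 ≤ k) :
    Summable fun x : ℕ × ℕ => (x.1 : ℝ) * kFreeWeight k (x.1 * x.2) := by
  refine (summable_iff_summable_sum_divisorsAntidiagonal
    (fun x => mul_nonneg (Nat.cast_nonneg _) (kFreeWeight_nonneg k _))
    (fun x hx => by simp [hx])).2 ?_
  refine (summable_kFreeWeight_pmul_sigma hk).congr fun n => ?_
  rw [Finset.sum_congr rfl fun x hx => by rw [(Nat.mem_divisorsAntidiagonal.1 hx).1],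
    ← Finset.sum_mul, Nat.sum_divisorsAntidiagonal (fun a _ => (a : ℝ)), pmul_apply, natCoe_apply,
    sigma_one_apply, mul_comm]
  push_cast
  rfl

end Summability

lemma sum_divisors_moebius (n : ℕ) : ∑ d ∈ n.divisors, μ d = if n = 1 then 1 else 0 := by
  rw [← coe_mul_zeta_apply, moebius_mul_coe_zeta, one_apply]

lemma card_filter_coprime_Icc_eq_sum_moebius {q : ℕ} (hq : q ≠ 0) (M : ℕ) :
    (#{m ∈ Finset.Icc 1 M | m.gcd q = 1} : ℤ) = ∑ d ∈ q.divisors, μ d * (M / d : ℕ) := by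
  have hdiv : ∀ m, (m.gcd q).divisors = {d ∈ q.divisors | d ∣ m} := fun m => by
    rw [← Nat.divisors_filter_dvd_of_dvd hq (Nat.gcd_dvd_right m q)]
    exact Finset.filter_congr fun d _ => ⟨fun h => h.trans (Nat.gcd_dvd_left m q),
      fun h => Nat.dvd_gcd h (Nat.mem_divisors.1 ‹_›).1⟩
  calc (#{m ∈ Finset.Icc 1 M | m.gcd q = 1} : ℤ)
      = ∑ m ∈ Finset.Icc 1 M, ∑ d ∈ (m.gcd q).divisors, μ d := by
        simp only [sum_divisors_moebius, Finset.sum_boole]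
    _ = ∑ d ∈ q.divisors, μ d * #{m ∈ Finset.Icc 1 M | d ∣ m} := by
        simp only [hdiv, Finset.sum_filter]
        rw [Finset.sum_comm]
        simp [Finset.sum_ite, mul_comm]
    _ = ∑ d ∈ q.divisors, μ d * (M / d : ℕ) := by
        simp only [← Nat.Ioc_filter_dvd_card_eq_div, ← Finset.Icc_add_one_left_eq_Ioc, zero_add]

lemma tsum_card_mul_eq_tsum_tsum_ite {α β : Type*} [DecidableEq β] {f : α → ℝ} (S : α → Finset β)
    (hS : Summable fun x => (#(S x) : ℝ) * |f x|) :
    ∑' x, (#(S x) : ℝ) * f x = ∑' c, ∑' x, if c ∈ S x then f x else 0 := by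
  have hrow : ∀ x (a : ℝ), ∑' c, (if c ∈ S x then a else 0) = #(S x) * a := fun x a => by
    rw [tsum_eq_sum (s := S x) fun c hc => if_neg hc, Finset.sum_ite_mem, Finset.inter_self,
      Finset.sum_const, nsmul_eq_mul]
  have hsum : Summable (Function.uncurry fun x c => if c ∈ S x then f x else 0) := by
    refine Summable.of_abs ((summable_prod_of_nonneg fun _ => abs_nonneg _).2 ⟨fun x => ?_, ?_⟩)
    · exact summable_of_ne_finset_zero (s := S x) fun c hc => by simp [hc]
    · simpa only [Function.uncurry_apply_pair, apply_ite, abs_zero, hrow] using hS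
  rw [hsum.tsum_comm]
  exact tsum_congr fun x => (hrow x (f x)).symm

section Rearrangement

variable {k : ℕ}

/-- The summand of `zk` at `x = (r, d)`, without the constraint `c ≤ r`. -/
noncomputable def zkTerm (k : ℕ) (x : ℕ × ℕ) : ℝ := μ x.2 * kFreeWeight k (x.1 * x.2)

lemma summable_fst_mul_abs_zkTerm (hk : 2 ≤ k) :
    Summable fun x : ℕ × ℕ => (x.1 : ℝ) * |zkTerm k x| := by
  refine (summable_fst_mul_kFreeWeight hk).of_nonneg_of_le (fun x => by positivity) fun x => ?_
  rw [zkTerm, abs_mul, abs_of_nonneg (kFreeWeight_nonneg k _)]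
  gcongr
  exact mul_le_of_le_one_left (kFreeWeight_nonneg k _) (mod_cast abs_moebius_le_one)

lemma summable_zkTerm_mul (hk : 2 ≤ k) {a : ℕ × ℕ → ℝ} (ha : ∀ x, |a x| ≤ x.1) :
    Summable fun x => zkTerm k x * a x :=
  (summable_fst_mul_abs_zkTerm hk).of_norm_bounded fun x => by
    rw [Real.norm_eq_abs, abs_mul, mul_comm]
    gcongr
    exact ha x

lemma Ztilde_eq_tsum_zkTerm (hk : 2 ≤ k) (N : ℕ) :
    Ztilde k N = ∑' x : ℕ × ℕ, zkTerm k x * (x.1 / N : ℕ) := by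
  have hfiber : ∀ q, muk (k + 1) q * Pk k q * #{m ∈ Finset.Icc 1 (q / N) | m.gcd q = 1} =
      ∑ x ∈ q.divisorsAntidiagonal, zkTerm k x * (x.1 / N : ℕ) := fun q => by
    rcases eq_or_ne q 0 with rfl | hq
    · simp [muk, not_kFree_zero]
    have hcount := congrArg (Int.cast : ℤ → ℝ) (card_filter_coprime_Icc_eq_sum_moebius hq (q / N))
    simp only [Int.cast_natCast, Int.cast_sum, Int.cast_mul] at hcount
    rw [← kFreeWeight_apply, hcount, Finset.mul_sum,
      Nat.sum_divisorsAntidiagonal' fun r d => zkTerm k (r, d) * (r / N : ℕ)]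
    refine Finset.sum_congr rfl fun d hd => ?_
    rw [zkTerm, Nat.div_mul_cancel (Nat.dvd_of_mem_divisors hd), Nat.div_div_eq_div_mul,
      Nat.div_div_eq_div_mul, mul_comm N d]
    ring
  rw [Ztilde, tsum_congr hfiber, tsum_eq_tsum_sum_divisorsAntidiagonal (fun x hx => by
      simp [zkTerm, hx])
    (summable_zkTerm_mul hk fun x => by simpa using Nat.div_le_self x.1 N)]

lemma tsum_ite_mem_filter_dvd_zkTerm (hk : 2 ≤ k) (N c : ℕ) :
    ∑' x : ℕ × ℕ, (if c ∈ {c ∈ Finset.Ioc 0 x.1 | N ∣ c} then zkTerm k x else 0) =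
      if 0 < c ∧ N ∣ c then zk k c else 0 := by
  split_ifs with hc
  · have hterm : ∀ r d, (if c ≤ r then (1 : ℝ) else 0) * μ d * muk (k + 1) (d * r) *
        Pk k (d * r) = zkTerm k (r, d) * (if c ≤ r then 1 else 0) := fun r d => by
      rw [zkTerm, kFreeWeight_apply, mul_comm d r]
      ring
    have hsum := summable_zkTerm_mul hk (a := fun x => if c ≤ x.1 then 1 else 0) fun x => by
      split_ifs with h
      · simpa using Nat.one_le_iff_ne_zero.2 (hc.1.trans_le h).ne'
      · simp
    simp_rw [zk, hterm, ← hsum.tsum_prod]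
    exact tsum_congr fun x => by simp [hc.1, hc.2]
  · refine (tsum_congr fun x => if_neg ?_).trans tsum_zero
    simp only [Finset.mem_filter, Finset.mem_Ioc]
    tauto

end Rearrangement

theorem statement4_general (k N : ℕ) (hk : 2 ≤ k) :
    Ztilde k N = ∑' c : ℕ, if 0 < c ∧ N ∣ c then zk k c else 0 := by
  let S : ℕ × ℕ → Finset ℕ := fun x => {c ∈ Finset.Ioc 0 x.1 | N ∣ c}
  have hcard : ∀ x, (#(S x) : ℝ) = (x.1 / N : ℕ) := fun x => by
    rw [Nat.Ioc_filter_dvd_card_eq_div]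
  calc Ztilde k N = ∑' x : ℕ × ℕ, zkTerm k x * (x.1 / N : ℕ) := Ztilde_eq_tsum_zkTerm hk N
    _ = ∑' x, (#(S x) : ℝ) * zkTerm k x := tsum_congr fun x => by rw [hcard, mul_comm]
    _ = ∑' c, ∑' x, if c ∈ S x then zkTerm k x else 0 := tsum_card_mul_eq_tsum_tsum_ite S <|
        (summable_fst_mul_abs_zkTerm hk).of_nonneg_of_le (fun x => by positivity) fun x => by
          rw [hcard]
          gcongr
          exact_mod_cast Nat.div_le_self x.1 N
    _ = ∑' c : ℕ, if 0 < c ∧ N ∣ c then zk k c else 0 :=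
        tsum_congr (tsum_ite_mem_filter_dvd_zkTerm hk N)

/-- `Z̃_k(N) = Σ_{c ≥ 1, N ∣ c} z_k(c)`. -/
theorem statement4 (k N : ℕ) (hk : 2 ≤ k) (hN : 1 ≤ N) :
    Ztilde k N = ∑' c : ℕ, if 0 < c ∧ N ∣ c then zk k c else 0 :=
  statement4_general k N hk
end

section
/- For every integer k ≥ 2 and every positive integer c, one has z_k(c) = ξ_k · Σ_{t∈ℕ, t ≥ c^{1/k}} (|μ(t)|/t^{2k}) · Π_{p prime, p∣t} 1/(1 − 2p^{−k}), where ξ_k := Π_{p prime} (1 − (p^k−1)^{−2}). -/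
open scoped Classical BigOperators Topology
open Filter Asymptotics

/-!
The inner sum `zkInner k r = ∑_d μ(d) μ_{k+1}(dr) P_k(dr)` vanishes unless `r = t^k` with `t`
squarefree: a prime power `p^(k+1) ∣ r` kills every term, and a prime `p ∣ r` with `p^k ∤ r` makes
the terms at `d` and `p d` cancel. For `r = t^k` only the `d` coprime to `t` survive, and
`∑_{(d,t)=1} μ(d) P_k(d)` is the Euler product `∏_{p ∤ t} (1 - (p^k-1)^{-2})`, i.e. `ξ_k` divided by
the factors at `p ∣ t`. Per prime, `(p^k-1)^{-2} / (1 - (p^k-1)^{-2}) = p^{-2k} (1 - 2p^{-k})^{-1}`,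
which produces the summand, and `c ≤ t^k` iff `c^{1/k} ≤ t`.
-/

open ArithmeticFunction
open scoped ArithmeticFunction.Moebius

lemma Squarefree.not_pow_succ_dvd_pow {m q : ℕ} (hm : Squarefree m) (hq : q.Prime) (j : ℕ) :
    ¬ q ^ (j + 1) ∣ m ^ j := by
  intro h
  rw [hq.pow_dvd_iff_le_factorization (pow_ne_zero _ hm.ne_zero), Nat.factorization_pow,
    Finsupp.smul_apply, smul_eq_mul] at h
  nlinarith [hm.natFactorization_le_one q]

lemma tsum_eq_zero_of_mul_eq_neg {E : Type*} [NormedAddCommGroup E] [CompleteSpace E]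
    {f : ℕ → E} (hf : Summable f) {p : ℕ} (hp : p ≠ 0)
    (h : ∀ e, f (p * e) = -{d | ¬ p ∣ d}.indicator f e) : ∑' d, f d = 0 := by
  set s : Set ℕ := {d | ¬ p ∣ d}
  have hrange : Set.range (p * ·) = sᶜ := by
    ext d
    simp [s, dvd_def, eq_comm]
  rw [← Summable.tsum_add_tsum_compl (s := s) (hf.subtype _) (hf.subtype _), ← hrange,
    tsum_range f (mul_right_injective₀ hp), tsum_subtype s f]
  simp only [h, tsum_neg, add_neg_cancel]

lemma hasProd_one_sub_tsum_moebius_mul_prod {R : Type*} [NormedCommRing R] [CompleteSpace R]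
    {w : ℕ → R} (hw : Summable fun d => ‖(μ d : R) * ∏ p ∈ d.primeFactors, w p‖) :
    HasProd (fun p : Nat.Primes => 1 - w p) (∑' d, (μ d : R) * ∏ p ∈ d.primeFactors, w p) := by
  set g : ArithmeticFunction R := pmul (μ : ArithmeticFunction R) (prodPrimeFactors w)
  have hg (d : ℕ) : g d = μ d * ∏ p ∈ d.primeFactors, w p := by
    rcases eq_or_ne d 0 with rfl | hd
    · simp [g]
    · simp [g, hd]
  have hmul : g.IsMultiplicative :=
    isMultiplicative_moebius.intCast.pmul (IsMultiplicative.prodPrimeFactors w)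
  have h := hmul.eulerProduct_hasProd (by simpa only [hg] using hw)
  simp only [hg] at h
  have hfactor (p : Nat.Primes) :
      ∑' e, (μ ((p : ℕ) ^ e) : R) * ∏ q ∈ ((p : ℕ) ^ e).primeFactors, w q = 1 - w p := by
    rw [tsum_eq_sum (s := Finset.range 2)]
    · rw [Finset.sum_range_succ, Finset.sum_range_one, pow_zero, pow_one, moebius_apply_one,
        Nat.primeFactors_one, Finset.prod_empty, moebius_apply_prime p.2, p.2.primeFactors,
        Finset.prod_singleton]
      push_cast
      ring
    · intro e he
      have he2 : 1 < e := by simpa using he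
      rw [moebius_apply_prime_pow p.2 (by omega), if_neg (by omega), Int.cast_zero, zero_mul]
  simpa only [hfactor] using h

lemma Nat.Primes.hasProd_ite_dvd {M : Type*} [CommMonoid M] [TopologicalSpace M] {t : ℕ}
    (ht : t ≠ 0) (f : ℕ → M) :
    HasProd (fun p : Nat.Primes => if (p : ℕ) ∣ t then f p else 1)
      (∏ p ∈ t.primeFactors, f p) := by
  have h : HasProd (fun p : Nat.Primes => if (p : ℕ) ∣ t then f p else 1)
      (∏ p ∈ t.primeFactors.subtype Nat.Prime, if (p : ℕ) ∣ t then f p else 1) :=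
    hasProd_prod_of_ne_finset_one fun p hp =>
      if_neg fun hpt => hp (Finset.mem_subtype.2 (Nat.mem_primeFactors.2 ⟨p.2, hpt, ht⟩))
  rwa [Finset.prod_subtype_eq_prod_filter (fun p => if p ∣ t then f p else 1),
    Finset.filter_true_of_mem fun p hp => Nat.prime_of_mem_primeFactors hp,
    Finset.prod_congr rfl fun p hp => if_pos (Nat.dvd_of_mem_primeFactors hp)] at h

lemma inv_sub_one_sq_eq {K : Type*} [Field K] {x : K} (h0 : x ≠ 0) (h1 : x - 1 ≠ 0)
    (h2 : x - 2 ≠ 0) :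
    ((x - 1) ^ 2)⁻¹ = (1 - ((x - 1) ^ 2)⁻¹) * ((x ^ 2)⁻¹ * (1 - 2 / x)⁻¹) := by
  have h2' : 1 - 2 / x ≠ 0 := by
    rw [one_sub_div h0]; exact div_ne_zero h2 h0
  field_simp
  ring

section Weights

variable {k : ℕ}

lemma muk_nonneg (j q : ℕ) : 0 ≤ muk j q := by
  unfold muk; split_ifs <;> norm_num

lemma muk_le_one (j q : ℕ) : muk j q ≤ 1 := by
  unfold muk; split_ifs <;> norm_num

lemma muk_eq_zero_of_pow_dvd {j q p : ℕ} (hp : p.Prime) (h : p ^ j ∣ q) : muk j q = 0 :=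
  if_neg fun hq => hq p hp h

lemma kFree_prime_mul_iff {j m p : ℕ} (hp : p.Prime) (hpm : ¬ p ^ j ∣ m) :
    KFree (j + 1) (p * m) ↔ KFree (j + 1) m := by
  refine ⟨fun h q hq hqm => h q hq (hqm.mul_left p), fun h q hq hqpm => ?_⟩
  rcases eq_or_ne q p with rfl | hqp
  · rw [pow_succ'] at hqpm
    exact hpm (Nat.dvd_of_mul_dvd_mul_left hq.pos hqpm)
  · have hcop : (q ^ (j + 1)).Coprime p := ((Nat.coprime_primes hq hp).2 hqp).pow_left _
    exact h q hq (hcop.dvd_of_dvd_mul_left hqpm)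

lemma sq_le_pow_sub_one_sq (hk : 2 ≤ k) {p : ℕ} (hp : 2 ≤ p) :
    (p : ℝ) ^ 2 ≤ ((p : ℝ) ^ k - 1) ^ 2 := by
  have hp' : (2 : ℝ) ≤ p := by exact_mod_cast hp
  have hpk : (p : ℝ) ^ 2 ≤ (p : ℝ) ^ k := pow_le_pow_right₀ (by linarith) hk
  exact pow_le_pow_left₀ (by linarith) (by nlinarith) 2

lemma inv_pow_sub_one_sq_le_one (hk : 2 ≤ k) {p : ℕ} (hp : 2 ≤ p) :
    (((p : ℝ) ^ k - 1) ^ 2)⁻¹ ≤ 1 := by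
  refine inv_le_one_of_one_le₀ (le_trans ?_ (sq_le_pow_sub_one_sq hk hp))
  exact one_le_pow₀ (by exact_mod_cast (by omega : 1 ≤ p))

lemma Pk_nonneg (k q : ℕ) : 0 ≤ Pk k q :=
  Finset.prod_nonneg fun _ _ => by positivity

lemma Pk_mul_of_coprime {m n : ℕ} (h : m.Coprime n) : Pk k (m * n) = Pk k m * Pk k n := by
  rw [Pk, Pk, Pk, h.primeFactors_mul, Finset.prod_union h.disjoint_primeFactors]

lemma Pk_prime_mul {p m : ℕ} (hp : p.Prime) (hm : m ≠ 0) (hpm : p ∣ m) :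
    Pk k (p * m) = Pk k m := by
  rw [Pk, Pk, Nat.primeFactors_mul hp.ne_zero hm, hp.primeFactors, Finset.singleton_union,
    Finset.insert_eq_of_mem (Nat.mem_primeFactors.2 ⟨hp, hpm, hm⟩)]

lemma Pk_le_of_dvd (hk : 2 ≤ k) {d m : ℕ} (hm : m ≠ 0) (hdm : d ∣ m) : Pk k m ≤ Pk k d := by
  rw [Pk, ← Finset.prod_sdiff (Nat.primeFactors_mono hdm hm)]
  refine mul_le_of_le_one_left (Pk_nonneg k d) (Finset.prod_le_one (fun _ _ => by positivity) ?_)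
  intro p hp
  exact inv_pow_sub_one_sq_le_one hk
    (Nat.prime_of_mem_primeFactors (Finset.mem_sdiff.1 hp).1).two_le

lemma Pk_le_inv_sq (hk : 2 ≤ k) {d : ℕ} (hd : Squarefree d) : Pk k d ≤ ((d : ℝ) ^ 2)⁻¹ := by
  calc Pk k d ≤ ∏ p ∈ d.primeFactors, ((p : ℝ) ^ 2)⁻¹ := by
        refine Finset.prod_le_prod (fun _ _ => by positivity) fun p hp => ?_
        have hp2 := (Nat.prime_of_mem_primeFactors hp).two_le
        exact inv_anti₀ (by positivity) (sq_le_pow_sub_one_sq hk hp2)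
    _ = ((d : ℝ) ^ 2)⁻¹ := by
        rw [Finset.prod_inv_distrib, Finset.prod_pow, ← Nat.cast_prod,
          Nat.prod_primeFactors_of_squarefree hd]

lemma abs_moebius_mul_Pk_le (hk : 2 ≤ k) (d : ℕ) : |(μ d : ℝ)| * Pk k d ≤ ((d : ℝ) ^ 2)⁻¹ := by
  by_cases hd : Squarefree d
  · rw [← Int.cast_abs, abs_moebius_eq_one_of_squarefree hd, Int.cast_one, one_mul]
    exact Pk_le_inv_sq hk hd
  · rw [moebius_eq_zero_of_not_squarefree hd, Int.cast_zero, abs_zero, zero_mul]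
    positivity

lemma summable_of_abs_le_moebius_mul_Pk (hk : 2 ≤ k) {f : ℕ → ℝ}
    (h : ∀ d, |f d| ≤ |(μ d : ℝ)| * Pk k d) : Summable f :=
  summable_abs_iff.1 <| (Real.summable_nat_pow_inv.2 one_lt_two).of_nonneg_of_le
    (fun _ => abs_nonneg _) fun d => (h d).trans (abs_moebius_mul_Pk_le hk d)

end Weights

section Inner

variable {k : ℕ}

noncomputable def zkInner (k r : ℕ) : ℝ :=
  ∑' d : ℕ, (μ d : ℝ) * muk (k + 1) (d * r) * Pk k (d * r)

lemma zk_eq_tsum_zkInner (k c : ℕ) :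
    zk k c = ∑' r : ℕ, (if c ≤ r then (1 : ℝ) else 0) * zkInner k r := by
  simp only [zk, zkInner, ← tsum_mul_left, mul_assoc]

lemma summable_zkInner (hk : 2 ≤ k) (r : ℕ) :
    Summable fun d : ℕ => (μ d : ℝ) * muk (k + 1) (d * r) * Pk k (d * r) := by
  refine summable_of_abs_le_moebius_mul_Pk hk fun d => ?_
  rcases eq_or_ne (d * r) 0 with hdr | hdr
  · rw [hdr, muk_eq_zero_of_pow_dvd Nat.prime_two (dvd_zero _), mul_zero, zero_mul, abs_zero]
    exact mul_nonneg (abs_nonneg _) (Pk_nonneg k d)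
  · rw [abs_mul, abs_mul, abs_of_nonneg (muk_nonneg _ _), abs_of_nonneg (Pk_nonneg _ _)]
    calc |(μ d : ℝ)| * muk (k + 1) (d * r) * Pk k (d * r) ≤ |(μ d : ℝ)| * 1 * Pk k d := by
          gcongr
          · exact Pk_nonneg _ _
          · exact muk_le_one _ _
          · exact Pk_le_of_dvd hk hdr (dvd_mul_right d r)
      _ = |(μ d : ℝ)| * Pk k d := by rw [mul_one]

lemma zkInner_eq_zero_of_pow_succ_dvd {r p : ℕ} (hp : p.Prime) (h : p ^ (k + 1) ∣ r) :
    zkInner k r = 0 := by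
  have hmuk (d : ℕ) : muk (k + 1) (d * r) = 0 := muk_eq_zero_of_pow_dvd hp (h.mul_left d)
  simp [zkInner, hmuk]

/-- Pairing `d` with `p * d` for `p ∤ d` cancels the series: `μ` changes sign while the other
two factors do not see the extra `p`, because `p` already divides `r` to a power below `k`. -/
lemma zkInner_eq_zero_of_dvd_of_not_pow_dvd (hk : 2 ≤ k) {r p : ℕ} (hp : p.Prime)
    (hpr : p ∣ r) (hpk : ¬ p ^ k ∣ r) : zkInner k r = 0 := by
  have hr : r ≠ 0 := by rintro rfl; exact hpk (dvd_zero _)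
  refine tsum_eq_zero_of_mul_eq_neg (summable_zkInner hk r) hp.ne_zero fun e => ?_
  by_cases hpe : p ∣ e
  · have hsq : ¬ Squarefree (p * e) := fun h =>
      Nat.squarefree_iff_prime_squarefree.1 h p hp (mul_dvd_mul_left p hpe)
    simp [hpe, moebius_eq_zero_of_not_squarefree hsq]
  · have he : e ≠ 0 := by rintro rfl; exact hpe (dvd_zero p)
    have hcop : p.Coprime e := hp.coprime_iff_not_dvd.2 hpe
    have hmu : (μ (p * e) : ℝ) = -μ e := by
      rw [isMultiplicative_moebius.map_mul_of_coprime hcop, moebius_apply_prime hp]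
      push_cast; ring
    have hpker : ¬ p ^ k ∣ e * r := fun h => hpk ((hcop.pow_left k).dvd_of_dvd_mul_left h)
    have hmuk : muk (k + 1) (p * e * r) = muk (k + 1) (e * r) := by
      rw [mul_assoc, muk, muk, if_congr (kFree_prime_mul_iff hp hpker) rfl rfl]
    have hPk : Pk k (p * e * r) = Pk k (e * r) := by
      rw [mul_assoc, Pk_prime_mul hp (mul_ne_zero he hr) (hpr.mul_left e)]
    simp only [Set.indicator, Set.mem_ofPred_eq, hpe, not_false_eq_true, if_true, hmu, hmuk, hPk]
    ring

end Inner

section Euler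

variable {k : ℕ}

/-- Chosen so that `∏ p ∈ d.primeFactors, coprimeWeight k t p` is `Pk k d` if `d` is coprime to
`t` and `0` otherwise. -/
noncomputable def coprimeWeight (k t p : ℕ) : ℝ :=
  if p ∣ t then 0 else (((p : ℝ) ^ k - 1) ^ 2)⁻¹

lemma coprimeWeight_nonneg (k t p : ℕ) : 0 ≤ coprimeWeight k t p := by
  unfold coprimeWeight; split_ifs <;> positivity

lemma coprimeWeight_le (k t p : ℕ) : coprimeWeight k t p ≤ (((p : ℝ) ^ k - 1) ^ 2)⁻¹ := by
  unfold coprimeWeight; split_ifs <;> first | positivity | rfl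

lemma zkInner_pow_eq_Pk_mul_tsum (hk : 2 ≤ k) {t : ℕ} (ht : Squarefree t) :
    zkInner k (t ^ k) =
      Pk k (t ^ k) * ∑' d, (μ d : ℝ) * ∏ p ∈ d.primeFactors, coprimeWeight k t p := by
  rw [zkInner, ← tsum_mul_left]
  refine tsum_congr fun d => ?_
  by_cases hd : Squarefree d
  swap
  · simp [moebius_eq_zero_of_not_squarefree hd]
  by_cases hdt : d.Coprime t
  · have hfree : KFree (k + 1) (d * t ^ k) := by
      intro q hq h
      have hdvd : d * t ^ k ∣ (d * t) ^ k := by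
        rw [mul_pow]
        exact mul_dvd_mul_right (dvd_pow_self d (by omega)) _
      exact (Nat.squarefree_mul hdt |>.2 ⟨hd, ht⟩).not_pow_succ_dvd_pow hq k (h.trans hdvd)
    have hweight : ∏ p ∈ d.primeFactors, coprimeWeight k t p = Pk k d :=
      Finset.prod_congr rfl fun p hp => if_neg fun hpt =>
        (Nat.Coprime.coprime_dvd_left (Nat.dvd_of_mem_primeFactors hp) hdt |>
          (Nat.Prime.coprime_iff_not_dvd (Nat.prime_of_mem_primeFactors hp)).1) hpt
    rw [muk, if_pos hfree, Pk_mul_of_coprime (hdt.pow_right k), hweight]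
    ring
  · obtain ⟨q, hq, hqd, hqt⟩ := Nat.Prime.not_coprime_iff_dvd.1 hdt
    have hmuk : muk (k + 1) (d * t ^ k) = 0 := by
      refine muk_eq_zero_of_pow_dvd hq ?_
      rw [pow_succ, mul_comm d]
      exact mul_dvd_mul (pow_dvd_pow_of_dvd hqt k) hqd
    have hweight : ∏ p ∈ d.primeFactors, coprimeWeight k t p = 0 :=
      Finset.prod_eq_zero (Nat.mem_primeFactors.2 ⟨hq, hqd, hd.ne_zero⟩) (if_pos hqt)
    rw [hmuk, hweight]
    ring

lemma xi_eq_tsum_mul_prod (hk : 2 ≤ k) {t : ℕ} (ht : t ≠ 0) :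
    xi k = (∑' d, (μ d : ℝ) * ∏ p ∈ d.primeFactors, coprimeWeight k t p) *
      ∏ p ∈ t.primeFactors, (1 - (((p : ℝ) ^ k - 1) ^ 2)⁻¹) := by
  have hsum : Summable fun d => ‖(μ d : ℝ) * ∏ p ∈ d.primeFactors, coprimeWeight k t p‖ := by
    refine (summable_of_abs_le_moebius_mul_Pk hk fun d => ?_).norm
    rw [abs_mul, abs_of_nonneg (Finset.prod_nonneg fun p _ => coprimeWeight_nonneg k t p)]
    exact mul_le_mul_of_nonneg_left (Finset.prod_le_prod (fun p _ => coprimeWeight_nonneg k t p)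
      fun p _ => coprimeWeight_le k t p) (abs_nonneg _)
  have h := (hasProd_one_sub_tsum_moebius_mul_prod hsum).mul
    (Nat.Primes.hasProd_ite_dvd ht fun p => 1 - (((p : ℝ) ^ k - 1) ^ 2)⁻¹)
  rw [xi]
  refine (h.congr_fun fun p => ?_).tprod_eq
  unfold coprimeWeight
  split_ifs <;> ring

end Euler

section Evaluation

variable {k : ℕ}

lemma Pk_pow_of_squarefree (hk : 2 ≤ k) {t : ℕ} (ht : Squarefree t) :
    Pk k (t ^ k) = (∏ p ∈ t.primeFactors, (1 - (((p : ℝ) ^ k - 1) ^ 2)⁻¹)) *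
      (((t : ℝ) ^ (2 * k))⁻¹ * ∏ p ∈ t.primeFactors, (1 - 2 / (p : ℝ) ^ k)⁻¹) := by
  have htk : ((t : ℝ) ^ (2 * k))⁻¹ = ∏ p ∈ t.primeFactors, (((p : ℝ) ^ k) ^ 2)⁻¹ := by
    rw [Finset.prod_inv_distrib, Finset.prod_pow, Finset.prod_pow, ← Nat.cast_prod,
      Nat.prod_primeFactors_of_squarefree ht, ← pow_mul, mul_comm]
  rw [Pk, Nat.primeFactors_pow t (by omega), htk, ← Finset.prod_mul_distrib,
    ← Finset.prod_mul_distrib]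
  refine Finset.prod_congr rfl fun p hp => ?_
  have hp2 : (2 : ℝ) ≤ p := by exact_mod_cast (Nat.prime_of_mem_primeFactors hp).two_le
  have hx : (2 : ℝ) ^ 2 ≤ (p : ℝ) ^ k :=
    (pow_le_pow_left₀ zero_le_two hp2 2).trans (pow_le_pow_right₀ (by linarith) hk)
  exact inv_sub_one_sq_eq (by linarith) (by linarith) (by linarith)

lemma zkInner_pow_of_squarefree (hk : 2 ≤ k) {t : ℕ} (ht : Squarefree t) :
    zkInner k (t ^ k) =
      xi k * (((t : ℝ) ^ (2 * k))⁻¹ * ∏ p ∈ t.primeFactors, (1 - 2 / (p : ℝ) ^ k)⁻¹) := by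
  rw [zkInner_pow_eq_Pk_mul_tsum hk ht, xi_eq_tsum_mul_prod hk ht.ne_zero,
    Pk_pow_of_squarefree hk ht]
  ring

lemma zkInner_pow_of_not_squarefree (hk : 2 ≤ k) {t : ℕ} (ht : ¬ Squarefree t) :
    zkInner k (t ^ k) = 0 := by
  obtain ⟨p, hp, hpt⟩ : ∃ p, p.Prime ∧ p * p ∣ t := by
    simpa [Nat.squarefree_iff_prime_squarefree] using ht
  refine zkInner_eq_zero_of_pow_succ_dvd hp ?_
  calc p ^ (k + 1) ∣ (p * p) ^ k := by rw [← sq, ← pow_mul]; exact pow_dvd_pow p (by omega)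
    _ ∣ t ^ k := pow_dvd_pow_of_dvd hpt k

lemma exists_pow_eq_of_zkInner_ne_zero (hk : 2 ≤ k) {r : ℕ} (h : zkInner k r ≠ 0) :
    ∃ t, t ^ k = r := by
  have hr : r ≠ 0 := by
    rintro rfl
    exact h (zkInner_eq_zero_of_pow_succ_dvd Nat.prime_two (dvd_zero _))
  refine ⟨∏ p ∈ r.primeFactors, p, ?_⟩
  conv_rhs => rw [← Nat.prod_factorization_pow_eq_self hr]
  rw [Finsupp.prod, Nat.support_factorization, ← Finset.prod_pow]
  refine Finset.prod_congr rfl fun p hp => congrArg (p ^ ·) (le_antisymm ?_ ?_)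
  all_goals have hp' := Nat.prime_of_mem_primeFactors hp
  · by_contra hlt
    exact h (zkInner_eq_zero_of_dvd_of_not_pow_dvd hk hp' (Nat.dvd_of_mem_primeFactors hp)
      fun hpk => hlt ((hp'.pow_dvd_iff_le_factorization hr).1 hpk))
  · by_contra hlt
    exact h (zkInner_eq_zero_of_pow_succ_dvd hp'
      ((hp'.pow_dvd_iff_le_factorization hr).2 (by omega)))

lemma indicator_mul_zkInner_pow (hk : 2 ≤ k) (c t : ℕ) :
    (if c ≤ t ^ k then (1 : ℝ) else 0) * zkInner k (t ^ k) =
      xi k * ((if (c : ℝ) ^ ((k : ℝ)⁻¹) ≤ (t : ℝ) then (1 : ℝ) else 0) *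
        |(μ t : ℝ)| / (t : ℝ) ^ (2 * k) * ∏ p ∈ t.primeFactors, (1 - 2 / (p : ℝ) ^ k)⁻¹) := by
  have hind : c ≤ t ^ k ↔ (c : ℝ) ^ ((k : ℝ)⁻¹) ≤ t := by
    rw [Real.rpow_inv_le_iff_of_pos (by positivity) (by positivity) (by positivity),
      Real.rpow_natCast]
    exact_mod_cast Iff.rfl
  rw [if_congr hind rfl rfl]
  by_cases ht : Squarefree t
  · rw [zkInner_pow_of_squarefree hk ht, ← Int.cast_abs, abs_moebius_eq_one_of_squarefree ht]
    ring
  · simp [zkInner_pow_of_not_squarefree hk ht, moebius_eq_zero_of_not_squarefree ht]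

end Evaluation

theorem statement5_general (k c : ℕ) (hk : 2 ≤ k) :
    zk k c = xi k * ∑' t : ℕ,
      (if (c : ℝ) ^ (((k : ℝ))⁻¹) ≤ (t : ℝ) then (1 : ℝ) else 0) *
        |(ArithmeticFunction.moebius t : ℝ)| / (t : ℝ) ^ (2 * k) *
        ∏ p ∈ t.primeFactors, (1 - 2 / (p : ℝ) ^ k)⁻¹ := by
  have hinj : Function.Injective (· ^ k : ℕ → ℕ) := Nat.pow_left_injective (by omega)
  rw [zk_eq_tsum_zkInner, ← tsum_mul_left, ← hinj.tsum_eq fun r hr =>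
    exists_pow_eq_of_zkInner_ne_zero hk (right_ne_zero_of_mul hr)]
  exact tsum_congr (indicator_mul_zkInner_pow hk c)

/-- factorisation of `z_k(c)` as `ξ_k` times a tail of a convergent series. -/
theorem statement5 (k c : ℕ) (hk : 2 ≤ k) (hc : 1 ≤ c) :
    zk k c = xi k * ∑' t : ℕ,
      (if (c : ℝ) ^ (((k : ℝ))⁻¹) ≤ (t : ℝ) then (1 : ℝ) else 0) *
        |(ArithmeticFunction.moebius t : ℝ)| / (t : ℝ) ^ (2 * k) *
        ∏ p ∈ t.primeFactors, (1 - 2 / (p : ℝ) ^ k)⁻¹ :=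
  statement5_general k c hk
end

section
/- For every integer k ≥ 2, Π_{p prime} (1 − 2p/((p+1)p^k)) ≥ ζ(k − 1/2)^{−1}, where ζ is the Riemann zeta function; consequently c_k = (2k/(2k−1)) · (ζ(2−1/k)/ζ(2)) · (1 + O(2^{−k})) with an absolute implied constant. -/
open scoped Classical BigOperators Topology
open Filter Asymptotics

/-!
Since `2√p ≤ p + 1`, each factor satisfies `2p/((p+1)p^k) ≤ p^(-(k - 1/2))`, so the product
over primes dominates, factor by factor, the Euler product `∏_p (1 - p^(-(k-1/2))) = ζ(k-1/2)⁻¹`.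
For the asymptotics, comparing `∑_{n ≥ 2} n^(-s)` with `2^(3/2-s) ∑_{n ≥ 2} n^(-3/2)` and
telescoping `n^(-3/2) ≤ 2/√(n-1) - 2/√n` gives `ζ(s) ≤ 1 + 2^(5/2-s)`; hence `ζ(k)` and
`ζ(k-1/2)` are `1 + O(2^(-k))`, and since the product lies between `ζ(k-1/2)⁻¹` and `1`,
`ζ(k)² ∏_p (…) = 1 + O(2^(-k))`.
-/

lemma zetaR_eq_one_add_tsum {s : ℝ} (hs : 1 < s) :
    zetaR s = 1 + ∑' n : ℕ, 1 / ((n : ℝ) + 2) ^ s := by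
  -- the `n = 0` term of `zetaR` is `1 / 0 = 0`
  rw [zetaR, ← (Real.summable_one_div_nat_rpow.mpr hs).sum_add_tsum_nat_add 2]
  simp [Finset.sum_range_succ, Real.zero_rpow (by linarith : s ≠ 0)]

lemma one_le_zetaR {s : ℝ} (hs : 1 < s) : 1 ≤ zetaR s := by
  rw [zetaR_eq_one_add_tsum hs]
  exact le_add_of_nonneg_right (tsum_nonneg fun n => by positivity)

lemma summable_one_div_nat_add_two_rpow {s : ℝ} (hs : 1 < s) :
    Summable fun n : ℕ => 1 / ((n : ℝ) + 2) ^ s := by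
  simpa using (summable_nat_add_iff 2).mpr (Real.summable_one_div_nat_rpow.mpr hs)

lemma tsum_one_div_nat_add_two_rpow_le {σ s : ℝ} (hσ : 1 < σ) (hσs : σ ≤ s) :
    ∑' n : ℕ, 1 / ((n : ℝ) + 2) ^ s ≤ 2 ^ (σ - s) * ∑' n : ℕ, 1 / ((n : ℝ) + 2) ^ σ := by
  rw [← tsum_mul_left]
  refine (summable_one_div_nat_add_two_rpow (hσ.trans_le hσs)).tsum_le_tsum (fun n => ?_)
    ((summable_one_div_nat_add_two_rpow hσ).mul_left _)
  have hn : (2 : ℝ) ≤ n + 2 := by linarith [n.cast_nonneg (α := ℝ)]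
  have hsplit : ((n : ℝ) + 2) ^ s = ((n : ℝ) + 2) ^ σ * ((n : ℝ) + 2) ^ (s - σ) := by
    rw [← Real.rpow_add (by linarith)]; ring_nf
  have hle : (2 : ℝ) ^ (s - σ) ≤ ((n : ℝ) + 2) ^ (s - σ) :=
    Real.rpow_le_rpow (by norm_num) hn (by linarith)
  calc 1 / ((n : ℝ) + 2) ^ s = 1 / (((n : ℝ) + 2) ^ σ * ((n : ℝ) + 2) ^ (s - σ)) := by
        rw [hsplit]
    _ ≤ 1 / (((n : ℝ) + 2) ^ σ * 2 ^ (s - σ)) := by gcongr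
    _ = 2 ^ (σ - s) * (1 / ((n : ℝ) + 2) ^ σ) := by
        rw [show σ - s = -(s - σ) by ring, Real.rpow_neg zero_le_two]
        field_simp

lemma one_div_rpow_three_halves_le_sub {x : ℝ} (hx : 0 < x) :
    1 / (x + 1) ^ (3 / 2 : ℝ) ≤ 2 / √x - 2 / √(x + 1) := by
  obtain ⟨a, ha, rfl⟩ : ∃ a, 0 < a ∧ x = a ^ 2 := ⟨√x, by positivity, (Real.sq_sqrt hx.le).symm⟩
  obtain ⟨b, hb, hab⟩ : ∃ b, 0 < b ∧ a ^ 2 + 1 = b ^ 2 :=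
    ⟨√(a ^ 2 + 1), by positivity, (Real.sq_sqrt (by positivity)).symm⟩
  have hpow : (b ^ 2) ^ (3 / 2 : ℝ) = b ^ 3 := by
    rw [← Real.rpow_natCast b 2, ← Real.rpow_mul hb.le]
    norm_num
  rw [hab, hpow, Real.sqrt_sq ha.le, Real.sqrt_sq hb.le]
  have hab' : a ≤ b := by nlinarith
  rw [div_sub_div _ _ ha.ne' hb.ne', div_le_div_iff₀ (by positivity) (by positivity)]
  -- `b - a = 1 / (a + b) ≥ 1 / (2 b)`
  nlinarith [mul_pos ha hb, mul_le_mul_of_nonneg_right hab' hb.le]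

lemma tsum_one_div_nat_add_two_rpow_three_halves_le :
    ∑' n : ℕ, 1 / ((n : ℝ) + 2) ^ (3 / 2 : ℝ) ≤ 2 := by
  refine Real.tsum_le_of_sum_range_le (fun n => by positivity) fun N => ?_
  calc ∑ n ∈ Finset.range N, 1 / ((n : ℝ) + 2) ^ (3 / 2 : ℝ)
      ≤ ∑ n ∈ Finset.range N, (2 / √((n : ℝ) + 1) - 2 / √(((n + 1 : ℕ) : ℝ) + 1)) := by
        refine Finset.sum_le_sum fun n _ => ?_
        have h := one_div_rpow_three_halves_le_sub (x := (n : ℝ) + 1) (by positivity)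
        rw [add_assoc, one_add_one_eq_two] at h
        push_cast
        rwa [add_assoc, one_add_one_eq_two]
    _ = 2 - 2 / √((N : ℝ) + 1) := by rw [Finset.sum_range_sub']; simp
    _ ≤ 2 := by linarith [show 0 ≤ 2 / √((N : ℝ) + 1) by positivity]

lemma zetaR_le_one_add_rpow {s : ℝ} (hs : 3 / 2 ≤ s) : zetaR s ≤ 1 + 2 ^ (5 / 2 - s) := by
  rw [zetaR_eq_one_add_tsum (by linarith), add_le_add_iff_left]
  calc ∑' n : ℕ, 1 / ((n : ℝ) + 2) ^ s
      ≤ 2 ^ (3 / 2 - s) * ∑' n : ℕ, 1 / ((n : ℝ) + 2) ^ (3 / 2 : ℝ) :=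
        tsum_one_div_nat_add_two_rpow_le (by norm_num) hs
    _ ≤ 2 ^ (3 / 2 - s) * 2 := by
        gcongr; exact tsum_one_div_nat_add_two_rpow_three_halves_le
    _ = 2 ^ (5 / 2 - s) := by
        rw [show (5 / 2 - s) = (3 / 2 - s) + 1 by ring, Real.rpow_add_one two_ne_zero]

lemma hasProd_one_sub_rpow_neg {s : ℝ} (hs : 1 < s) :
    HasProd (fun p : Nat.Primes => 1 - ((p : ℕ) : ℝ) ^ (-s)) (zetaR s)⁻¹ := by
  let F : ℕ →*₀ ℝ :=
    { toFun := fun n => (n : ℝ) ^ (-s)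
      map_zero' := by simp [Real.zero_rpow (by linarith : -s ≠ 0)]
      map_one' := by simp
      map_mul' := fun m n => by
        push_cast
        exact Real.mul_rpow m.cast_nonneg n.cast_nonneg }
  have hF : Summable fun n => ‖F n‖ := by
    simpa [F, abs_of_nonneg (Real.rpow_nonneg (Nat.cast_nonneg _) _)] using
      Real.summable_nat_rpow.mpr (by linarith : -s < -1)
  have hζ : ∑' n, F n = zetaR s := by
    simp [zetaR, F, Real.rpow_neg (Nat.cast_nonneg _)]
  have := (EulerProduct.eulerProduct_completely_multiplicative_hasProd hF).inv₀
    (hζ ▸ (one_pos.trans_le (one_le_zetaR hs)).ne')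
  simp only [inv_inv, hζ] at this
  exact this

lemma HasProd.le_of_nonneg_of_le {ι : Type*} {f g : ι → ℝ} {a b : ℝ} (hf : HasProd f a)
    (hg : HasProd g b) (hf0 : ∀ i, 0 ≤ f i) (hfg : ∀ i, f i ≤ g i) : a ≤ b :=
  le_of_tendsto_of_tendsto' hf hg fun _ => Finset.prod_le_prod (fun i _ => hf0 i) fun i _ => hfg i

section EulerFactors

variable {s : ℝ} {a : Nat.Primes → ℝ}

lemma Nat.Primes.rpow_neg_le_one (p : Nat.Primes) (hs : 0 ≤ s) : ((p : ℕ) : ℝ) ^ (-s) ≤ 1 :=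
  Real.rpow_le_one_of_one_le_of_nonpos (by exact_mod_cast p.prop.one_le) (by linarith)

lemma multipliable_one_sub_of_le_rpow_neg (hs : 1 < s) (ha0 : ∀ p, 0 ≤ a p)
    (ha : ∀ p : Nat.Primes, a p ≤ ((p : ℕ) : ℝ) ^ (-s)) :
    Multipliable fun p => 1 - a p := by
  have hsum : Summable fun p : Nat.Primes => ((p : ℕ) : ℝ) ^ (-s) :=
    (Real.summable_nat_rpow.mpr (by linarith)).comp_injective Subtype.coe_injective
  simpa [sub_eq_add_neg] using
    Real.multipliable_one_add_of_summable (hsum.of_nonneg_of_le ha0 ha).neg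

lemma inv_zetaR_le_tprod_one_sub (hs : 1 < s) (ha0 : ∀ p, 0 ≤ a p)
    (ha : ∀ p : Nat.Primes, a p ≤ ((p : ℕ) : ℝ) ^ (-s)) :
    (zetaR s)⁻¹ ≤ ∏' p, (1 - a p) :=
  (hasProd_one_sub_rpow_neg hs).le_of_nonneg_of_le
    (multipliable_one_sub_of_le_rpow_neg hs ha0 ha).hasProd
    (fun p => sub_nonneg.mpr (p.rpow_neg_le_one (by linarith)))
    fun p => by linarith [ha p]

lemma tprod_one_sub_le_one (hs : 1 < s) (ha0 : ∀ p, 0 ≤ a p)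
    (ha : ∀ p : Nat.Primes, a p ≤ ((p : ℕ) : ℝ) ^ (-s)) :
    ∏' p, (1 - a p) ≤ 1 :=
  (multipliable_one_sub_of_le_rpow_neg hs ha0 ha).hasProd.le_of_nonneg_of_le hasProd_one
    (fun p => by linarith [ha p, p.rpow_neg_le_one (by linarith : 0 ≤ s)])
    fun p => by linarith [ha0 p]

end EulerFactors

lemma two_mul_div_le_rpow_neg {x : ℝ} (hx : 0 < x) (k : ℕ) :
    2 * x / ((x + 1) * x ^ k) ≤ x ^ (-((k : ℝ) - 1 / 2)) := by
  have hsplit : x ^ (-((k : ℝ) - 1 / 2)) = √x / x ^ k := by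
    rw [show -((k : ℝ) - 1 / 2) = 1 / 2 - k by ring, Real.rpow_sub hx, Real.rpow_natCast,
      Real.sqrt_eq_rpow]
  rw [hsplit, ← div_div, div_le_div_iff_of_pos_right (by positivity),
    div_le_iff₀ (by linarith)]
  -- `2 x ≤ √x (x + 1)` is AM-GM for `√x` and `1`
  nlinarith [Real.sq_sqrt hx.le, sq_nonneg (√x - 1), Real.sqrt_nonneg x]

lemma abs_sq_mul_sub_one_le {z w P δ : ℝ} (hz : 1 ≤ z) (hzδ : z ≤ 1 + δ) (hw : 0 < w)
    (hwδ : w ≤ 1 + δ) (hwP : w⁻¹ ≤ P) (hP : P ≤ 1) (hδ : δ ≤ 2) :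
    |z ^ 2 * P - 1| ≤ 4 * δ := by
  have hP0 : 0 < P := (inv_pos.mpr hw).trans_le hwP
  have hδ0 : 0 ≤ δ := by linarith
  have hPδ : 1 - δ ≤ P := calc
    1 - δ ≤ 1 / (1 + δ) := (le_div_iff₀ (by linarith)).mpr (by nlinarith)
    _ ≤ w⁻¹ := by rw [one_div]; exact inv_anti₀ hw hwδ
    _ ≤ P := hwP
  have hzP : P ≤ z ^ 2 * P := le_mul_of_one_le_left hP0.le (by nlinarith)
  have hz2 : z ^ 2 * P ≤ (1 + δ) ^ 2 :=
    (mul_le_of_le_one_right (by positivity) hP).trans (by gcongr)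
  rw [abs_le]
  constructor <;> nlinarith

/-- `∏_p (1 - 2p/((p+1)p^k)) ≥ ζ(k-1/2)⁻¹`, and consequently
`c_k = (2k/(2k-1)) (ζ(2-1/k)/ζ(2)) (1 + O(2^{-k}))`. -/
theorem statement18 :
    (∀ k : ℕ, 2 ≤ k →
      (zetaR ((k : ℝ) - 1 / 2))⁻¹ ≤
        ∏' p : Nat.Primes,
          (1 - 2 * ((p : ℕ) : ℝ) / ((((p : ℕ) : ℝ) + 1) * ((p : ℕ) : ℝ) ^ k))) ∧
    ∃ C : ℝ, 0 < C ∧ ∀ k : ℕ, 2 ≤ k → ∃ E : ℝ,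
      ck k = (2 * (k : ℝ) / (2 * (k : ℝ) - 1)) * (zetaR (2 - 1 / (k : ℝ)) / zetaR 2) *
        (1 + E) ∧ |E| ≤ C * 2 ^ (-(k : ℝ)) := by
  have ha0 (k : ℕ) (p : Nat.Primes) :
      0 ≤ 2 * ((p : ℕ) : ℝ) / ((((p : ℕ) : ℝ) + 1) * ((p : ℕ) : ℝ) ^ k) := by positivity
  have ha (k : ℕ) (p : Nat.Primes) :
      2 * ((p : ℕ) : ℝ) / ((((p : ℕ) : ℝ) + 1) * ((p : ℕ) : ℝ) ^ k) ≤
        ((p : ℕ) : ℝ) ^ (-((k : ℝ) - 1 / 2)) :=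
    two_mul_div_le_rpow_neg (by exact_mod_cast p.prop.pos) k
  have hs {k : ℕ} (hk : 2 ≤ k) : 1 < (k : ℝ) - 1 / 2 := by
    have : (2 : ℝ) ≤ k := by exact_mod_cast hk
    linarith
  refine ⟨fun k hk => inv_zetaR_le_tprod_one_sub (hs hk) (ha0 k) (ha k), 32, by norm_num,
    fun k hk => ⟨zetaR k ^ 2 * ∏' p : Nat.Primes,
      (1 - 2 * ((p : ℕ) : ℝ) / ((((p : ℕ) : ℝ) + 1) * ((p : ℕ) : ℝ) ^ k)) - 1,
      by rw [ck]; ring, ?_⟩⟩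
  have hk2 : (2 : ℝ) ≤ k := by exact_mod_cast hk
  have hzk : zetaR k ≤ 1 + 2 ^ (3 - (k : ℝ)) :=
    (zetaR_le_one_add_rpow (by linarith)).trans (by gcongr <;> norm_num)
  have hzk' : zetaR (k - 1 / 2) ≤ 1 + 2 ^ (3 - (k : ℝ)) := by
    convert zetaR_le_one_add_rpow (s := k - 1 / 2) (by linarith) using 3; ring
  have hδ : (2 : ℝ) ^ (3 - (k : ℝ)) ≤ 2 := by
    simpa using Real.rpow_le_rpow_of_exponent_le one_le_two (by linarith : 3 - (k : ℝ) ≤ 1)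
  calc _ ≤ 4 * 2 ^ (3 - (k : ℝ)) :=
        abs_sq_mul_sub_one_le (one_le_zetaR (by linarith)) hzk
          (one_pos.trans_le (one_le_zetaR (hs hk))) hzk'
          (inv_zetaR_le_tprod_one_sub (hs hk) (ha0 k) (ha k))
          (tprod_one_sub_le_one (hs hk) (ha0 k) (ha k)) hδ
    _ = 32 * 2 ^ (-(k : ℝ)) := by
        rw [sub_eq_add_neg, Real.rpow_add two_pos]; norm_num [← mul_assoc]
end

section
/- For every positive integer a and every real x ≥ 1, Σ_{c∈ℕ, c>x, (p∣c ⟹ p∣a)} 1/c ≤ x^{−24/35} · Π_{p prime, p∣a} (1 + Σ_{j=1}^∞ 2^{−11j/35}) ≤ τ(a)³ · x^{−24/35}, where the sum is over positive integers c > x all of whose prime factors divide a, and τ(a) denotes the number of positive divisors of a. -/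
open scoped Classical BigOperators Topology
open Filter Asymptotics

/-!
Rankin's trick: for `c > x ≥ 1` and `0 < s ≤ 1` we have `1/c ≤ x^(s-1) c^(-s)`, so the tail is at
most `x^(s-1)` times the full sum of `c^(-s)` over the integers built from the primes of `a`, which
is the Euler product `∏_{p ∣ a} (1 - p^(-s))⁻¹ ≤ (1 - 2^(-s))⁻¹ ^ ω(a)`. With `s = 11/35` the
factor `(1 - 2^(-s))⁻¹` is at most `8 = 2^3`, and `2^ω(a) ≤ τ(a)`.
-/

open Finset

noncomputable def natRpowHom (s : ℝ) : ℕ →* ℝ where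
  toFun n := (n : ℝ) ^ s
  map_one' := by simp
  map_mul' m n := by
    push_cast
    exact Real.mul_rpow (Nat.cast_nonneg m) (Nat.cast_nonneg n)

lemma natRpowHom_apply (s : ℝ) (n : ℕ) : natRpowHom s n = (n : ℝ) ^ s := rfl

lemma Nat.mem_factoredNumbers_primeFactors {a c : ℕ} (ha : a ≠ 0) :
    c ∈ Nat.factoredNumbers a.primeFactors ↔ ∀ p : ℕ, p.Prime → p ∣ c → p ∣ a := by
  simp only [Nat.mem_factoredNumbers', Nat.mem_primeFactors_of_ne_zero ha]
  exact forall₂_congr fun p hp => imp_congr_right fun _ => and_iff_right hp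

lemma hasSum_rpow_neg_factoredNumbers (S : Finset ℕ) {s : ℝ} (hs : 0 < s) :
    HasSum (fun m : Nat.factoredNumbers S => (m : ℝ) ^ (-s))
      (∏ p ∈ S with p.Prime, (1 - (p : ℝ) ^ (-s))⁻¹) := by
  refine (EulerProduct.summable_and_hasSum_factoredNumbers_prod_filter_prime_geometric
    (f := natRpowHom (-s)) (fun {p} hp => ?_) S).2
  rw [natRpowHom_apply, Real.norm_of_nonneg (by positivity)]
  exact Real.rpow_lt_one_of_one_lt_of_neg (by exact_mod_cast hp.one_lt) (neg_lt_zero.mpr hs)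

lemma one_div_le_rpow_sub_one_mul_rpow_neg {x c s : ℝ} (hx : 0 < x) (hxc : x ≤ c) (hs : s ≤ 1) :
    1 / c ≤ x ^ (s - 1) * c ^ (-s) := by
  have hc : 0 < c := hx.trans_le hxc
  calc 1 / c = c ^ (s - 1) * c ^ (-s) := by
        rw [← Real.rpow_add hc, show s - 1 + -s = -1 by ring, Real.rpow_neg_one, one_div]
    _ ≤ x ^ (s - 1) * c ^ (-s) := by
        gcongr ?_ * _
        exact Real.rpow_le_rpow_of_nonpos hx hxc (by linarith)

lemma tsum_one_div_factoredNumbers_gt_le (S : Finset ℕ) {s x : ℝ} (hs0 : 0 < s) (hs1 : s ≤ 1)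
    (hx : 0 < x) :
    ∑' c : ℕ, (if x < c ∧ c ∈ Nat.factoredNumbers S then 1 / (c : ℝ) else 0) ≤
      x ^ (s - 1) * ∏ p ∈ S with p.Prime, (1 - (p : ℝ) ^ (-s))⁻¹ := by
  set g : ℕ → ℝ := (Nat.factoredNumbers S).indicator fun c => (c : ℝ) ^ (-s)
  have hg : HasSum g (∏ p ∈ S with p.Prime, (1 - (p : ℝ) ^ (-s))⁻¹) :=
    hasSum_subtype_iff_indicator.mp (hasSum_rpow_neg_factoredNumbers S hs0)
  have hle : ∀ c : ℕ, (if x < c ∧ c ∈ Nat.factoredNumbers S then 1 / (c : ℝ) else 0) ≤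
      x ^ (s - 1) * g c := by
    intro c
    split_ifs with h
    · rw [show g c = (c : ℝ) ^ (-s) from Set.indicator_of_mem h.2 _]
      exact one_div_le_rpow_sub_one_mul_rpow_neg hx h.1.le hs1
    · exact mul_nonneg (by positivity) (Set.indicator_nonneg (fun _ _ => by positivity) c)
  have hsum := Summable.of_nonneg_of_le (fun c => by split_ifs <;> positivity) hle
    (hg.summable.mul_left _)
  exact (hsum.tsum_le_tsum hle (hg.summable.mul_left _)).trans_eq
    (by rw [tsum_mul_left, hg.tsum_eq])

lemma one_add_tsum_rpow_neg_mul_succ {b s : ℝ} (hb : 1 < b) (hs : 0 < s) :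
    1 + ∑' j : ℕ, b ^ (-(s * ((j : ℝ) + 1))) = (1 - b ^ (-s))⁻¹ := by
  have hr0 : 0 ≤ b ^ (-s) := by positivity
  have hr1 : b ^ (-s) < 1 := Real.rpow_lt_one_of_one_lt_of_neg hb (neg_lt_zero.mpr hs)
  have hterm : ∀ j : ℕ, b ^ (-(s * ((j : ℝ) + 1))) = (b ^ (-s)) ^ j * b ^ (-s) := by
    intro j
    rw [← pow_succ, ← Real.rpow_natCast, ← Real.rpow_mul (by linarith)]
    push_cast
    ring_nf
  rw [tsum_congr hterm, tsum_mul_right, tsum_geometric_of_lt_one hr0 hr1]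
  field_simp [(sub_pos.mpr hr1).ne']
  ring

lemma inv_one_sub_rpow_neg_pos {c s : ℝ} (hc : 1 < c) (hs : 0 < s) : 0 < (1 - c ^ (-s))⁻¹ :=
  inv_pos.mpr (sub_pos.mpr (Real.rpow_lt_one_of_one_lt_of_neg hc (neg_lt_zero.mpr hs)))

lemma inv_one_sub_rpow_neg_le {b c s : ℝ} (hb : 1 < b) (hbc : b ≤ c) (hs : 0 < s) :
    (1 - c ^ (-s))⁻¹ ≤ (1 - b ^ (-s))⁻¹ := by
  have hb1 : b ^ (-s) < 1 := Real.rpow_lt_one_of_one_lt_of_neg hb (neg_lt_zero.mpr hs)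
  have hcb : c ^ (-s) ≤ b ^ (-s) :=
    Real.rpow_le_rpow_of_nonpos (by linarith) hbc (neg_nonpos.mpr hs.le)
  gcongr

lemma prod_primeFactors_inv_one_sub_rpow_neg_le (n : ℕ) {s : ℝ} (hs : 0 < s) :
    ∏ p ∈ n.primeFactors, (1 - (p : ℝ) ^ (-s))⁻¹ ≤ ∏ _p ∈ n.primeFactors, (1 - (2 : ℝ) ^ (-s))⁻¹ := by
  refine prod_le_prod (fun p hp => ?_) fun p hp => ?_
  all_goals have hp2 : (2 : ℝ) ≤ p := by exact_mod_cast (Nat.prime_of_mem_primeFactors hp).two_le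
  · exact (inv_one_sub_rpow_neg_pos (by linarith) hs).le
  · exact inv_one_sub_rpow_neg_le one_lt_two hp2 hs

lemma inv_one_sub_two_rpow_neg_le_eight : (1 - (2 : ℝ) ^ (-(11 / 35 : ℝ)))⁻¹ ≤ 8 := by
  -- equivalent to `2 ^ (-11/35) ≤ 7/8`, i.e. to `8 ^ 35 ≤ 2 ^ 11 * 7 ^ 35`
  have h35 : ((2 : ℝ) ^ (-(11 / 35 : ℝ))) ^ 35 = (2 ^ 11)⁻¹ := by
    rw [← Real.rpow_natCast, ← Real.rpow_mul zero_le_two]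
    norm_num [Real.rpow_neg]
  have h78 : (2 : ℝ) ^ (-(11 / 35 : ℝ)) ≤ 7 / 8 :=
    le_of_pow_le_pow_left₀ (n := 35) (by norm_num) (by norm_num) (by rw [h35]; norm_num)
  rw [inv_le_comm₀ (by linarith) (by norm_num)]
  linarith

lemma Nat.two_pow_card_primeFactors_le_card_divisors {n : ℕ} (hn : n ≠ 0) :
    2 ^ #n.primeFactors ≤ #n.divisors := by
  rw [Nat.card_divisors hn, ← prod_const]
  refine prod_le_prod' fun p hp => ?_
  have : n.factorization p ≠ 0 := Finsupp.mem_support_iff.mp (by rwa [Nat.support_factorization])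
  omega

lemma Nat.prod_primeFactors_const_le_card_divisors_pow {n k : ℕ} (hn : n ≠ 0) {C : ℝ}
    (hC0 : 0 ≤ C) (hC : C ≤ 2 ^ k) : ∏ _p ∈ n.primeFactors, C ≤ (#n.divisors : ℝ) ^ k :=
  calc ∏ _p ∈ n.primeFactors, C ≤ ((2 : ℝ) ^ k) ^ #n.primeFactors := by
        rw [prod_const]; gcongr
    _ = ((2 : ℝ) ^ #n.primeFactors) ^ k := by rw [← pow_mul, ← pow_mul, mul_comm]
    _ ≤ (#n.divisors : ℝ) ^ k := by
        gcongr
        exact_mod_cast Nat.two_pow_card_primeFactors_le_card_divisors hn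

/-- tail estimate for the sum of `1/c` over integers `c > x`
all of whose prime factors divide `a`. -/
theorem statement19 (a : ℕ) (ha : 1 ≤ a) (x : ℝ) (hx : 1 ≤ x) :
    (∑' c : ℕ, if x < (c : ℝ) ∧ ∀ p : ℕ, p.Prime → p ∣ c → p ∣ a then 1 / (c : ℝ) else 0) ≤
      x ^ (-(24 : ℝ) / 35) *
        ∏ p ∈ a.primeFactors, (1 + ∑' j : ℕ, (2 : ℝ) ^ (-(11 * ((j : ℝ) + 1)) / 35)) ∧
    x ^ (-(24 : ℝ) / 35) *
        ∏ p ∈ a.primeFactors, (1 + ∑' j : ℕ, (2 : ℝ) ^ (-(11 * ((j : ℝ) + 1)) / 35)) ≤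
      ((a.divisors.card : ℝ)) ^ 3 * x ^ (-(24 : ℝ) / 35) := by
  have ha0 : a ≠ 0 := by omega
  have hs : (0 : ℝ) < 11 / 35 := by norm_num
  have hC : 1 + ∑' j : ℕ, (2 : ℝ) ^ (-(11 * ((j : ℝ) + 1)) / 35) =
      (1 - 2 ^ (-(11 / 35 : ℝ)))⁻¹ := by
    rw [← one_add_tsum_rpow_neg_mul_succ one_lt_two hs]
    congr 1
    exact tsum_congr fun j => by ring_nf
  have hprimes : {p ∈ a.primeFactors | p.Prime} = a.primeFactors :=
    filter_true_of_mem fun p => Nat.prime_of_mem_primeFactors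
  rw [hC, show -(24 : ℝ) / 35 = 11 / 35 - 1 by norm_num]
  refine ⟨?_, ?_⟩
  · simp_rw [← Nat.mem_factoredNumbers_primeFactors ha0]
    refine (tsum_one_div_factoredNumbers_gt_le _ hs (by norm_num) (by linarith)).trans ?_
    rw [hprimes]
    gcongr _ * ?_
    exact prod_primeFactors_inv_one_sub_rpow_neg_le a hs
  · rw [mul_comm]
    gcongr
    exact Nat.prod_primeFactors_const_le_card_divisors_pow ha0
      (inv_one_sub_rpow_neg_pos one_lt_two hs).le
      (inv_one_sub_two_rpow_neg_le_eight.trans_eq (by norm_num))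
end
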